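/- There exists ε ∈ (0, 1/3) such that for every γ with 0 ≤ γ < ε: ∑_{j=2}^{∞} [ (j² − 1)^{−(1−γ)/2} − j^{−(1−γ)} ] < 1/2. Consequently, for the sequence b defined by b(1) = b(−1) = 1, b(0) = −2, and b(i) = 0 otherwise, one has ∑_{j∈ℤ} (U_γ b)(j) = −2 + 4 ∑_{j=2}^{∞} [ (j² − 1)^{−(1−γ)/2} − j^{−(1−γ)} ] < 0 for every 0 ≤ γ < ε. -/

import Mathlib

open scoped ENNReal NNReal BigOperators

/-- The kernel of the fractional series operator `T_{α,β}`:
`1 / (|i-j|^α |i+j|^β)` for `i ≠ ±j`, and `0` for `i = ±j`. -/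
noncomputable def Tker (α β : ℝ) (i j : ℤ) : ℝ :=
  if i = j ∨ i = -j then 0 else 1 / (|(i : ℝ) - (j : ℝ)| ^ α * |(i : ℝ) + (j : ℝ)| ^ β)

/-- The operator `U_γ = T_{(1-γ)/2, (1-γ)/2}`:
`(U_γ b)(j) = ∑_{i ≠ ±j} b(i) / (|i-j|^{(1-γ)/2} |i+j|^{(1-γ)/2})`. -/
noncomputable def Uop (γ : ℝ) (b : ℤ → ℂ) (j : ℤ) : ℂ :=
  ∑' i : ℤ, (Tker ((1 - γ) / 2) ((1 - γ) / 2) i j : ℂ) * b i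

/-- The sequence `b` with `b(±1) = 1`, `b(0) = -2` and `b(i) = 0` otherwise. -/
noncomputable def bSpec : ℤ → ℂ := fun i =>
  if i = 1 ∨ i = -1 then 1 else if i = 0 then -2 else 0

/-- The tail series `∑_{j=2}^{∞} [(j²-1)^{-(1-γ)/2} - j^{-(1-γ)}]` (indexed by `j = n+2`). -/
noncomputable def tailSum (γ : ℝ) : ℝ :=
  ∑' n : ℕ, ((((n : ℝ) + 2) ^ 2 - 1) ^ (-(1 - γ) / 2) - ((n : ℝ) + 2) ^ (-(1 - γ)))

/-!
Write `s = (1 - γ) / 2` and `a = j² - 1`. Since `a ^ (1 - s) ≤ (a + 1) ^ (1 - s)`, the tail term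
`a ^ (-s) - (a + 1) ^ (-s)` is at most `a ^ (-s) / j²`; for `s ≥ 1/3` and `j ≥ 3` we have
`a ^ (-s) ≤ 8 ^ (-1/3) = 1/2`, so the tail is dominated by `∑ 1 / (2 (j - 1) j) = 1/2`, strictly
at `j = 2`.

As `b` is supported on `{-1, 0, 1}` and the kernel satisfies `K(-i, j) = K(i, j)`, we get
`(U_γ b)(j) = 2 (K(1, j) - K(0, j))`, an even function of `j` which is `2` at `0`, `-2` at `±1`
and twice the tail term at `|j| ≥ 2`.
-/

open Real

lemma rpow_neg_sub_rpow_neg_le {a b s : ℝ} (ha : 0 < a) (hab : a ≤ b) (hs : s ≤ 1) :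
    a ^ (-s) - b ^ (-s) ≤ a ^ (-s) * (b - a) / b := by
  have hb : 0 < b := ha.trans_le hab
  have key : a ^ (-s) * a ≤ b ^ (-s) * b := by
    rw [← rpow_add_one ha.ne', ← rpow_add_one hb.ne']
    exact rpow_le_rpow ha.le hab (by linarith)
  rw [le_div_iff₀ hb]
  linarith

lemma rpow_neg_le_half {y s : ℝ} (hy : 8 ≤ y) (hs : 1 / 3 ≤ s) : y ^ (-s) ≤ 1 / 2 := by
  have h8 : (8 : ℝ) ^ (-(1 / 3 : ℝ)) = 1 / 2 := by
    rw [rpow_neg (by norm_num), show (8 : ℝ) = 2 ^ 3 by norm_num,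
      show (1 / 3 : ℝ) = ((3 : ℕ) : ℝ)⁻¹ by norm_num,
      pow_rpow_inv_natCast (by norm_num) (by norm_num)]
    norm_num
  calc y ^ (-s) ≤ 8 ^ (-s) := rpow_le_rpow_of_nonpos (by norm_num) hy (by linarith)
    _ ≤ 8 ^ (-(1 / 3 : ℝ)) := rpow_le_rpow_of_exponent_le (by norm_num) (by linarith)
    _ = 1 / 2 := h8

lemma hasSum_one_div_add_one_mul_add_two :
    HasSum (fun n : ℕ => 1 / (((n : ℝ) + 1) * ((n : ℝ) + 2))) 1 := by
  have hpartial (N : ℕ) :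
      ∑ n ∈ Finset.range N, 1 / (((n : ℝ) + 1) * ((n : ℝ) + 2)) = 1 - 1 / ((N : ℝ) + 1) := by
    induction N with
    | zero => simp
    | succ N ih =>
      rw [Finset.sum_range_succ, ih]
      push_cast
      field_simp
      ring
  rw [hasSum_iff_tendsto_nat_of_nonneg (fun n => by positivity)]
  simp only [hpartial]
  simpa using tendsto_one_div_add_atTop_nhds_zero_nat.const_sub (1 : ℝ)

noncomputable def tailTerm (γ x : ℝ) : ℝ :=
  (x ^ 2 - 1) ^ (-(1 - γ) / 2) - x ^ (-(1 - γ))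

lemma tailSum_eq_tsum_tailTerm (γ : ℝ) : tailSum γ = ∑' n : ℕ, tailTerm γ (n + 2) := rfl

lemma tailTerm_eq {γ x : ℝ} (hx : 0 ≤ x) :
    tailTerm γ x = (x ^ 2 - 1) ^ (-((1 - γ) / 2)) - (x ^ 2) ^ (-((1 - γ) / 2)) := by
  rw [tailTerm, ← rpow_natCast, ← rpow_mul hx]
  ring_nf

lemma tailTerm_nonneg {γ x : ℝ} (hγ : γ ≤ 1) (hx : 1 < x) : 0 ≤ tailTerm γ x := by
  rw [tailTerm_eq (by linarith), sub_nonneg]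
  exact rpow_le_rpow_of_nonpos (by nlinarith) (by linarith) (by linarith)

lemma tailTerm_le {γ x : ℝ} (hγ : -1 ≤ γ) (hx : 1 < x) :
    tailTerm γ x ≤ (x ^ 2 - 1) ^ (-((1 - γ) / 2)) / x ^ 2 := by
  rw [tailTerm_eq (by linarith)]
  convert rpow_neg_sub_rpow_neg_le (a := x ^ 2 - 1) (b := x ^ 2) (s := (1 - γ) / 2)
    (by nlinarith) (by linarith) (by linarith) using 2
  ring

lemma tailTerm_two_lt {γ : ℝ} (h0 : -1 ≤ γ) (h1 : γ < 1) : tailTerm γ 2 < 1 / 4 := by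
  have h3 : (3 : ℝ) ^ (-((1 - γ) / 2)) < 1 :=
    rpow_lt_one_of_one_lt_of_neg (by norm_num) (by linarith)
  have := tailTerm_le h0 (x := 2) (by norm_num)
  norm_num at this h3 ⊢
  linarith

lemma tailTerm_nat_add_two_le {γ : ℝ} (h0 : -1 ≤ γ) (h1 : γ ≤ 1 / 3) (n : ℕ) :
    tailTerm γ (n + 2) ≤ 1 / 2 * (1 / (((n : ℝ) + 1) * ((n : ℝ) + 2))) := by
  rcases Nat.eq_zero_or_pos n with rfl | hn
  · norm_num
    linarith [tailTerm_two_lt h0 (by linarith)]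
  have hn : (1 : ℝ) ≤ n := by exact_mod_cast hn
  have hx : (1 : ℝ) < n + 2 := by linarith
  calc tailTerm γ (n + 2) ≤ (((n : ℝ) + 2) ^ 2 - 1) ^ (-((1 - γ) / 2)) / ((n : ℝ) + 2) ^ 2 :=
        tailTerm_le h0 hx
    _ ≤ 1 / 2 / ((n : ℝ) + 2) ^ 2 :=
        div_le_div_of_nonneg_right (rpow_neg_le_half (by nlinarith) (by linarith)) (by positivity)
    _ ≤ 1 / 2 * (1 / (((n : ℝ) + 1) * ((n : ℝ) + 2))) := by
        rw [div_le_iff₀ (by positivity)]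
        field_simp
        nlinarith

lemma tailSum_lt_half {γ : ℝ} (h0 : -1 ≤ γ) (h1 : γ ≤ 1 / 3) : tailSum γ < 1 / 2 := by
  have hdom := hasSum_one_div_add_one_mul_add_two.mul_left (1 / 2)
  rw [mul_one] at hdom
  have := hdom.summable.tsum_lt_tsum_of_nonneg (i := 0)
    (fun n => tailTerm_nonneg (by linarith) (by linarith)) (tailTerm_nat_add_two_le h0 h1)
    (by norm_num; linarith [tailTerm_two_lt h0 (by linarith)])
  rwa [hdom.tsum_eq, ← tailSum_eq_tsum_tailTerm] at this

lemma summable_tailTerm {γ : ℝ} (h0 : -1 ≤ γ) (h1 : γ ≤ 1 / 3) :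
    Summable (fun n : ℕ => tailTerm γ (n + 2)) :=
  hasSum_one_div_add_one_mul_add_two.summable.mul_left (1 / 2) |>.of_nonneg_of_le
    (fun n => tailTerm_nonneg (by linarith) (by linarith)) (tailTerm_nat_add_two_le h0 h1)

lemma Tker_neg_left (α β : ℝ) (i j : ℤ) : Tker α β (-i) j = Tker β α i j := by
  unfold Tker
  push_cast
  rw [show |-(i : ℝ) - j| = |(i : ℝ) + j| by rw [← abs_neg]; ring_nf,
    show |-(i : ℝ) + j| = |(i : ℝ) - j| by rw [← abs_neg]; ring_nf, mul_comm]
  congr 1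
  rw [neg_eq_iff_eq_neg, neg_inj, or_comm]

lemma Tker_neg_right (α β : ℝ) (i j : ℤ) : Tker α β i (-j) = Tker β α i j := by
  unfold Tker
  push_cast
  rw [sub_neg_eq_add, ← sub_eq_add_neg, mul_comm]
  congr 1
  rw [neg_neg, or_comm]

lemma Tker_zero_left (α β : ℝ) {j : ℤ} (hj : j ≠ 0) : Tker α β 0 j = |(j : ℝ)| ^ (-(α + β)) := by
  have hj' : 0 < |(j : ℝ)| := by positivity
  rw [Tker, if_neg (by omega)]
  push_cast
  rw [zero_sub, zero_add, abs_neg, ← rpow_add hj', rpow_neg hj'.le, one_div]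

lemma Tker_one_left (α : ℝ) {j : ℤ} (hj : j ≠ 1) (hj' : j ≠ -1) :
    Tker α α 1 j = |(j : ℝ) ^ 2 - 1| ^ (-α) := by
  rw [Tker, if_neg (by omega)]
  push_cast
  rw [← mul_rpow (abs_nonneg _) (abs_nonneg _), ← abs_mul, rpow_neg (abs_nonneg _), one_div,
    ← abs_neg]
  ring_nf

lemma Tker_self (α β : ℝ) (j : ℤ) : Tker α β j j = 0 := by simp [Tker]

lemma Tker_one_zero (α β : ℝ) : Tker α β 1 0 = 1 := by simp [Tker]

lemma Tker_one_sub_Tker_zero_even (α : ℝ) :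
    Function.Even (fun j : ℤ => Tker α α 1 j - Tker α α 0 j) := fun j => by
  simp only [Tker_neg_right]

lemma Tker_one_sub_Tker_zero_natCast_add_two (α : ℝ) (n : ℕ) :
    Tker α α 1 ((n : ℤ) + 2) - Tker α α 0 ((n : ℤ) + 2) =
      (((n : ℝ) + 2) ^ 2 - 1) ^ (-α) - (((n : ℝ) + 2) ^ 2) ^ (-α) := by
  rw [Tker_one_left α (by omega) (by omega), Tker_zero_left α α (by omega)]
  push_cast
  have hx : (0 : ℝ) ≤ (n : ℝ) + 2 := by positivity
  rw [abs_of_nonneg (by nlinarith), abs_of_nonneg hx, ← rpow_natCast, ← rpow_mul hx]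
  ring_nf

lemma hasSum_Tker_one_sub_Tker_zero {α T : ℝ}
    (hT : HasSum (fun n : ℕ => (((n : ℝ) + 2) ^ 2 - 1) ^ (-α) - (((n : ℝ) + 2) ^ 2) ^ (-α)) T) :
    HasSum (fun j : ℤ => Tker α α 1 j - Tker α α 0 j) (-1 + 2 * T) := by
  set f := fun j : ℤ => Tker α α 1 j - Tker α α 0 j
  have hpos : HasSum (fun n : ℕ => f (n + 1)) (-1 + T) := by
    rw [← hasSum_nat_add_iff' 1]
    simpa [f, Tker_self, Tker_zero_left, add_assoc, Tker_one_sub_Tker_zero_natCast_add_two]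
      using hT
  have hneg : HasSum (fun n : ℕ => f (-(n + 1))) (-1 + T) :=
    hpos.congr_fun fun n => Tker_one_sub_Tker_zero_even α _
  convert hpos.of_add_one_of_neg_add_one hneg using 1
  simp only [f, Tker_self, Tker_one_zero, sub_zero, neg_add_cancel_comm]
  ring

lemma Uop_bSpec (γ : ℝ) (j : ℤ) :
    Uop γ bSpec j = ((2 * (Tker ((1 - γ) / 2) ((1 - γ) / 2) 1 j -
      Tker ((1 - γ) / 2) ((1 - γ) / 2) 0 j) : ℝ) : ℂ) := by
  rw [Uop, tsum_eq_sum (s := {-1, 0, 1}) fun i hi => by simp_all [bSpec],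
    Finset.sum_insert (by decide), Finset.sum_insert (by decide), Finset.sum_singleton,
    Tker_neg_left]
  norm_num [bSpec]
  ring

lemma hasSum_Uop_bSpec {γ : ℝ} (hsum : Summable (fun n : ℕ => tailTerm γ (n + 2))) :
    HasSum (Uop γ bSpec) ((-2 + 4 * tailSum γ : ℝ) : ℂ) := by
  have hT : HasSum (fun n : ℕ => (((n : ℝ) + 2) ^ 2 - 1) ^ (-((1 - γ) / 2)) -
      (((n : ℝ) + 2) ^ 2) ^ (-((1 - γ) / 2))) (tailSum γ) := by
    rw [tailSum_eq_tsum_tailTerm]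
    exact hsum.hasSum.congr_fun fun n => (tailTerm_eq (by positivity)).symm
  have := (hasSum_Tker_one_sub_Tker_zero hT).mul_left 2
  rw [show 2 * (-1 + 2 * tailSum γ) = -2 + 4 * tailSum γ by ring] at this
  exact (Complex.hasSum_ofReal.2 this).congr_fun (Uop_bSpec γ)

/-- **Negativity of the total sum of `U_γ b` for the special sequence `b`.**
There is `ε ∈ (0, 1/3)` such that for every `0 ≤ γ < ε` one has
`∑_{j=2}^∞ [(j²-1)^{-(1-γ)/2} - j^{-(1-γ)}] < 1/2`, and consequently, for the sequence
`b` with `b(±1) = 1`, `b(0) = -2`, `b(i) = 0` otherwise,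
`∑_{j ∈ ℤ} (U_γ b)(j) = -2 + 4 ∑_{j=2}^∞ [(j²-1)^{-(1-γ)/2} - j^{-(1-γ)}] < 0`. -/
theorem stmt14 :
    ∃ ε : ℝ, 0 < ε ∧ ε < 1 / 3 ∧ ∀ γ : ℝ, 0 ≤ γ → γ < ε →
      tailSum γ < 1 / 2 ∧
      (∑' j : ℤ, Uop γ bSpec j) = ((-2 + 4 * tailSum γ : ℝ) : ℂ) ∧
      (-2 + 4 * tailSum γ : ℝ) < 0 := by
  refine ⟨1 / 4, by norm_num, by norm_num, fun γ hγ0 hγε => ?_⟩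
  have hγ1 : γ ≤ 1 / 3 := by linarith
  have hlt := tailSum_lt_half (by linarith) hγ1
  exact ⟨hlt, (hasSum_Uop_bSpec (summable_tailTerm (by linarith) hγ1)).tsum_eq, by linarith⟩
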